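/- Let f : ℝⁿ → ℝ be μ-strongly convex (μ > 0) and L-smooth (L > 0), let x* be the minimizer of f with f* = f(x*), and set κ = L/μ. Define the Nesterov accelerated gradient iterates by x₋₁ = x₀ (given), y_k = x_k + ((√κ − 1)/(√κ + 1))·(x_k − x_{k-1}) and x_{k+1} = y_k − (1/L)∇f(y_k) for all k ≥ 0. Then for every k ≥ 0, f(x_k) − f* ≤ (1 − 1/√κ)^k · ( f(x₀) − f* + (μ/2)‖x₀ − x*‖² ). -/

import Mathlib

open RealInnerProductSpace

/-!
With `s = √κ` and `q = 1 / s`, the potential `Φ_k = f x_k - f x* + μ/2 ‖z_k - x*‖²` built on the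
extrapolated point `z_k = x_k + (s - 1) (x_k - x_{k-1})` contracts by the factor `1 - q` at every
step. The momentum rule is exactly what makes `z_k - y_k = s (y_k - x_k)` and
`z_{k+1} = (1 - q) z_k + q y_k - (q / μ) ∇f(y_k)`. Expanding `‖z_{k+1} - x*‖²` with the convexity
of `‖·‖²` and adding the descent lemma `f x_{k+1} ≤ f y_k - ‖∇f(y_k)‖² / (2L)` to the
strong-convexity lower bounds at `y_k`, tested against `x*` with weight `q` and against `x_k` with
weight `1 - q`, all inner products cancel. Finally `Φ_k ≥ f x_k - f x*` and `z_0 = x_0`.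
-/

section

variable {E : Type*} [NormedAddCommGroup E] [InnerProductSpace ℝ E]

theorem norm_smul_add_smul_sq_le {q : ℝ} (hq₀ : 0 ≤ q) (hq₁ : q ≤ 1) (u v : E) :
    ‖(1 - q) • u + q • v‖ ^ 2 ≤ (1 - q) * ‖u‖ ^ 2 + q * ‖v‖ ^ 2 :=
  (convexOn_univ_norm.pow (fun _ _ ↦ norm_nonneg _) 2).2 trivial trivial (sub_nonneg.2 hq₁) hq₀
    (sub_add_cancel 1 q)

variable [CompleteSpace E] {f : E → ℝ} {L μ : ℝ}

theorem le_add_inner_gradient_add_of_lipschitz_gradient (hf : Differentiable ℝ f)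
    (hlip : ∀ a b, ‖gradient f a - gradient f b‖ ≤ L * ‖a - b‖) (a b : E) :
    f b ≤ f a + ⟪gradient f a, b - a⟫ + L / 2 * ‖b - a‖ ^ 2 := by
  set d := b - a
  let φ : ℝ → ℝ := fun t ↦ f (a + t • d) - t * ⟪gradient f a, d⟫ - L / 2 * t ^ 2 * ‖d‖ ^ 2
  have hφ : ∀ t, HasDerivAt φ (⟪gradient f (a + t • d) - gradient f a, d⟫ - L * t * ‖d‖ ^ 2) t := by
    intro t
    have hline : HasDerivAt (fun t : ℝ ↦ a + t • d) d t := by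
      simpa using ((hasDerivAt_id t).smul_const d).const_add a
    have hcomp := (hf (a + t • d)).hasGradientAt.hasFDerivAt.comp_hasDerivAt t hline
    refine ((hcomp.sub ((hasDerivAt_id t).mul_const ⟪gradient f a, d⟫)).sub
      (((hasDerivAt_pow 2 t).const_mul (L / 2)).mul_const (‖d‖ ^ 2))).congr_deriv ?_
    simp only [InnerProductSpace.toDual_apply_apply, inner_sub_left]
    ring
  have hφ' : ∀ t ∈ interior (Set.Ici (0 : ℝ)),
      ⟪gradient f (a + t • d) - gradient f a, d⟫ - L * t * ‖d‖ ^ 2 ≤ 0 := by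
    intro t ht
    rw [interior_Ici, Set.mem_Ioi] at ht
    calc ⟪gradient f (a + t • d) - gradient f a, d⟫ - L * t * ‖d‖ ^ 2
        ≤ L * ‖a + t • d - a‖ * ‖d‖ - L * t * ‖d‖ ^ 2 := by
          gcongr
          exact (real_inner_le_norm _ _).trans (by gcongr; exact hlip _ _)
      _ = 0 := by
          rw [add_sub_cancel_left, norm_smul, Real.norm_of_nonneg ht.le]
          ring
  have hanti : AntitoneOn φ (Set.Ici 0) :=
    antitoneOn_of_hasDerivWithinAt_nonpos (convex_Ici 0)
      (fun t _ ↦ (hφ t).continuousAt.continuousWithinAt) (fun t _ ↦ (hφ t).hasDerivWithinAt) hφ'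
  have h01 := hanti Set.self_mem_Ici (Set.mem_Ici.2 zero_le_one) zero_le_one
  simp only [φ, d, one_smul, zero_smul, add_zero, add_sub_cancel] at h01
  linarith

theorem le_of_strongConvex_of_lipschitz_gradient [Nontrivial E] (hf : Differentiable ℝ f)
    (hlip : ∀ a b, ‖gradient f a - gradient f b‖ ≤ L * ‖a - b‖)
    (hsconv : ∀ a b, f a + ⟪gradient f a, b - a⟫ + μ / 2 * ‖b - a‖ ^ 2 ≤ f b) : μ ≤ L := by
  obtain ⟨v, hv⟩ := exists_ne (0 : E)
  have hupper := le_add_inner_gradient_add_of_lipschitz_gradient hf hlip 0 v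
  have hlower := hsconv 0 v
  have hv2 : 0 < ‖v - 0‖ ^ 2 := by rw [sub_zero]; exact pow_pos (norm_pos_iff.2 hv) 2
  have : μ / 2 * ‖v - 0‖ ^ 2 ≤ L / 2 * ‖v - 0‖ ^ 2 := by linarith
  linarith [le_of_mul_le_mul_right this hv2]

theorem gradient_step_le (hf : Differentiable ℝ f)
    (hlip : ∀ a b, ‖gradient f a - gradient f b‖ ≤ L * ‖a - b‖) (hL : 0 < L) (a : E) :
    f (a - (1 / L) • gradient f a) ≤ f a - 1 / (2 * L) * ‖gradient f a‖ ^ 2 := by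
  have h := le_add_inner_gradient_add_of_lipschitz_gradient hf hlip a (a - (1 / L) • gradient f a)
  rw [sub_sub_cancel_left, inner_neg_right, real_inner_smul_right, norm_neg, norm_smul,
    real_inner_self_eq_norm_sq, Real.norm_of_nonneg (by positivity)] at h
  convert h using 1
  field_simp
  ring

noncomputable def nesterovPotential (f : E → ℝ) (μ s : ℝ) (xs x xprev : E) : ℝ :=
  f x - f xs + μ / 2 * ‖x + (s - 1) • (x - xprev) - xs‖ ^ 2

theorem nesterovPotential_step_le (hf : Differentiable ℝ f)
    (hlip : ∀ a b, ‖gradient f a - gradient f b‖ ≤ L * ‖a - b‖)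
    (hsconv : ∀ a b, f a + ⟪gradient f a, b - a⟫ + μ / 2 * ‖b - a‖ ^ 2 ≤ f b)
    {s : ℝ} (hμ : 0 < μ) (hs : 1 ≤ s) (hL : μ * s ^ 2 = L) {xs x xprev y x' : E}
    (hy : y = x + ((s - 1) / (s + 1)) • (x - xprev)) (hx' : x' = y - (1 / L) • gradient f y) :
    nesterovPotential f μ s xs x' x ≤ (1 - 1 / s) * nesterovPotential f μ s xs x xprev := by
  have hs₀ : 0 < s := one_pos.trans_le hs
  have hq₀ : 0 ≤ 1 / s := by positivity
  have hq₁ : 1 / s ≤ 1 := div_le_one_of_le₀ hs hs₀.le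
  unfold nesterovPotential
  set q := 1 / s
  set c := q / μ
  set g := gradient f y
  set u := x + (s - 1) • (x - xprev) - xs
  set v := y - xs
  have hx_sub_y : x - y = -q • (u - v) := by
    simp only [u, v, q, hy]; match_scalars <;> field_simp <;> ring
  have hz' : x' + (s - 1) • (x' - x) - xs = (1 - q) • u + q • v - c • g := by
    simp only [u, v, q, c, hx', hy, ← hL]; match_scalars <;> field_simp <;> ring
  have hdescent : f x' ≤ f y - μ / 2 * c ^ 2 * ‖g‖ ^ 2 := by
    have h := gradient_step_le hf hlip (by rw [← hL]; positivity) y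
    rwa [← hx', ← hL, show 1 / (2 * (μ * s ^ 2)) = μ / 2 * c ^ 2 by simp only [c, q]; field_simp] at h
  have hopt : f y - ⟪g, v⟫ + μ / 2 * ‖v‖ ^ 2 ≤ f xs := by
    have h := hsconv y xs
    rwa [← neg_sub y xs, inner_neg_right, norm_neg, ← sub_eq_add_neg] at h
  have hprev : f y - q * (⟪g, u⟫ - ⟪g, v⟫) ≤ f x := by
    have h := hsconv y x
    rw [hx_sub_y, real_inner_smul_right, inner_sub_right] at h
    have : 0 ≤ μ / 2 * ‖-q • (u - v)‖ ^ 2 := by positivity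
    linarith
  have hnorm : ‖(1 - q) • u + q • v - c • g‖ ^ 2 ≤ (1 - q) * ‖u‖ ^ 2 + q * ‖v‖ ^ 2
      - 2 * c * ((1 - q) * ⟪g, u⟫ + q * ⟪g, v⟫) + c ^ 2 * ‖g‖ ^ 2 := by
    rw [norm_sub_sq_real, norm_smul, real_inner_smul_right, inner_add_left, real_inner_smul_left,
      real_inner_smul_left, real_inner_comm u, real_inner_comm v, Real.norm_of_nonneg (by positivity)]
    nlinarith [norm_smul_add_smul_sq_le hq₀ hq₁ u v]
  have hμc : μ * c = q := by simp only [c]; field_simp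
  rw [hz']
  linear_combination hdescent + mul_le_mul_of_nonneg_left hopt hq₀ +
    mul_le_mul_of_nonneg_left hprev (sub_nonneg.2 hq₁) + μ / 2 * hnorm -
    ((1 - q) * ⟪g, u⟫ + q * ⟪g, v⟫) * hμc

end

/-- The initial condition `x₋₁ = x₀` is encoded by ℕ-subtraction: `x (0 - 1) = x 0`. -/
theorem nesterov_strongly_convex_rate_general {n : ℕ} (f : EuclideanSpace ℝ (Fin n) → ℝ)
    (L μ : ℝ) (hμ : 0 < μ)
    (hsmooth : ContDiff ℝ 1 f)
    (hlip : ∀ a b, ‖gradient f a - gradient f b‖ ≤ L * ‖a - b‖)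
    (hsconv : ∀ a b, f a + ⟪gradient f a, b - a⟫ + μ / 2 * ‖b - a‖ ^ 2 ≤ f b)
    (xs : EuclideanSpace ℝ (Fin n))
    (x y : ℕ → EuclideanSpace ℝ (Fin n))
    (hy : ∀ k : ℕ, y k = x k +
      ((Real.sqrt (L / μ) - 1) / (Real.sqrt (L / μ) + 1)) • (x k - x (k - 1)))
    (hx : ∀ k : ℕ, x (k + 1) = y k - (1 / L) • gradient f (y k)) :
    ∀ k : ℕ, f (x k) - f xs ≤
      (1 - 1 / Real.sqrt (L / μ)) ^ k *
        (f (x 0) - f xs + μ / 2 * ‖x 0 - xs‖ ^ 2) := by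
  intro k
  rcases subsingleton_or_nontrivial (EuclideanSpace ℝ (Fin n)) with _ | _
  · simp [Subsingleton.elim (x k) xs, Subsingleton.elim (x 0) xs]
  have hf : Differentiable ℝ f := hsmooth.differentiable one_ne_zero
  have hμL : μ ≤ L := le_of_strongConvex_of_lipschitz_gradient hf hlip hsconv
  have hs : 1 ≤ √(L / μ) := Real.one_le_sqrt.2 ((one_le_div hμ).2 hμL)
  have hL : μ * √(L / μ) ^ 2 = L := by
    rw [Real.sq_sqrt (div_nonneg (hμ.le.trans hμL) hμ.le)]
    field_simp
  calc f (x k) - f xs ≤ nesterovPotential f μ √(L / μ) xs (x k) (x (k - 1)) :=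
        le_add_of_nonneg_right (by positivity)
    _ ≤ (1 - 1 / √(L / μ)) ^ k * nesterovPotential f μ √(L / μ) xs (x 0) (x (0 - 1)) :=
        le_geom (u := fun j ↦ nesterovPotential f μ √(L / μ) xs (x j) (x (j - 1)))
          (sub_nonneg.2 (div_le_one_of_le₀ hs (by positivity))) k fun j _ ↦
          nesterovPotential_step_le hf hlip hsconv hμ hs hL (hy j) (hx j)
    _ = _ := by simp [nesterovPotential]

/-- Nesterov's accelerated gradient method on a `μ`-strongly convex, `L`-smooth
function, with `α = 1/L`, momentum `(√κ - 1)/(√κ + 1)` where `κ = L/μ`: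
linear rate `(1 - 1/√κ)^k`.  The initial condition `x₋₁ = x₀` is encoded by
ℕ-subtraction: at `k = 0` the momentum term `x 0 - x (0-1) = 0`. -/
theorem nesterov_strongly_convex_rate {n : ℕ} (f : EuclideanSpace ℝ (Fin n) → ℝ)
    (L μ : ℝ) (hL : 0 < L) (hμ : 0 < μ)
    (hsmooth : ContDiff ℝ 1 f)
    (hlip : ∀ a b, ‖gradient f a - gradient f b‖ ≤ L * ‖a - b‖)
    (hsconv : ∀ a b, f a + ⟪gradient f a, b - a⟫ + μ / 2 * ‖b - a‖ ^ 2 ≤ f b)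
    (xs : EuclideanSpace ℝ (Fin n)) (hmin : ∀ z, f xs ≤ f z)
    (x y : ℕ → EuclideanSpace ℝ (Fin n))
    (hy : ∀ k : ℕ, y k = x k +
      ((Real.sqrt (L / μ) - 1) / (Real.sqrt (L / μ) + 1)) • (x k - x (k - 1)))
    (hx : ∀ k : ℕ, x (k + 1) = y k - (1 / L) • gradient f (y k)) :
    ∀ k : ℕ, f (x k) - f xs ≤
      (1 - 1 / Real.sqrt (L / μ)) ^ k *
        (f (x 0) - f xs + μ / 2 * ‖x 0 - xs‖ ^ 2) :=
  nesterov_strongly_convex_rate_general f L μ hμ hsmooth hlip hsconv xs x y hy hx
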